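/- Let G = (V,E) be a finite undirected graph, let γ > 0, let P be a partition of V, and let C ∈ P be a community that is the disjoint union of two nonempty sets S_1 and S_2 with no edges between them, i.e. E(S_1,S_2) = 0. Then splitting C strictly increases the CPM quality function: ΔH(S_1 ↦ ∅) > 0 and ΔH(S_2 ↦ ∅) > 0, where H is the CPM quality function with resolution parameter γ. -/
import Mathlib


open Finset

variable {V : Type*}

/-- `eBetween G S T` is the number of adjacent pairs `(u, v)` with `u ∈ S` and `v ∈ T`.
For disjoint `S` and `T` this is the number of edges between `S` and `T`. -/
noncomputable def eBetween (G : SimpleGraph V) [DecidableRel G.Adj] (S T : Finset V) : ℝ :=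
  ∑ u ∈ S, ∑ v ∈ T, if G.Adj u v then (1 : ℝ) else 0

/-- The Constant Potts Model quality function with resolution parameter `γ`:
`H(P) = Σ_{C ∈ P} [E(C,C) − γ·|C|(|C|−1)/2]`. -/
noncomputable def cpmQuality (G : SimpleGraph V) [DecidableRel G.Adj] (γ : ℝ)
    (P : Finset (Finset V)) : ℝ :=
  ∑ C ∈ P, (eBetween G C C / 2 - γ * (C.card : ℝ) * ((C.card : ℝ) - 1) / 2)

/-- `P` is a partition of `V` into nonempty communities. -/
def IsPartition [Fintype V] (P : Finset (Finset V)) : Prop :=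
  (∀ C ∈ P, C.Nonempty) ∧ ∀ v : V, ∃! C, C ∈ P ∧ v ∈ C

lemma eBetween_comm (G : SimpleGraph V) [DecidableRel G.Adj] (S T : Finset V) :
    eBetween G S T = eBetween G T S := by
  unfold eBetween
  rw [Finset.sum_comm]
  apply Finset.sum_congr rfl; intro u _
  apply Finset.sum_congr rfl; intro v _
  simp [G.adj_comm]

lemma key_split [Fintype V] [DecidableEq V] (G : SimpleGraph V) [DecidableRel G.Adj]
    (γ : ℝ) (hγ : 0 < γ)
    (P : Finset (Finset V)) (hP : IsPartition P)
    (C S₁ S₂ : Finset V) (hC : C ∈ P)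
    (hunion : C = S₁ ∪ S₂) (hdisj : Disjoint S₁ S₂)
    (h₁ : S₁.Nonempty) (h₂ : S₂.Nonempty)
    (hsep : eBetween G S₁ S₂ = 0) :
    0 < cpmQuality G γ (insert S₁ (insert S₂ (P.erase C))) - cpmQuality G γ P := by
  have hnotP : ∀ S T : Finset V, C = S ∪ T → Disjoint S T → S.Nonempty → T.Nonempty →
      S ∉ P := by
    intro S T hu hd hS hT hSP
    obtain ⟨v, hv⟩ := hS
    obtain ⟨D, _, hD⟩ := hP.2 v
    have h1 : S = D := hD S ⟨hSP, hv⟩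
    have h2 : C = D := hD C ⟨hC, by rw [hu]; exact Finset.mem_union_left _ hv⟩
    have hSC : S = C := h1.trans h2.symm
    obtain ⟨w, hw⟩ := hT
    have hwS : w ∈ S := by rw [hSC, hu]; exact Finset.mem_union_right _ hw
    exact Finset.disjoint_left.mp hd hwS hw
  have hS1P : S₁ ∉ P := hnotP S₁ S₂ hunion hdisj h₁ h₂
  have hS2P : S₂ ∉ P := hnotP S₂ S₁ (by rw [hunion, Finset.union_comm]) hdisj.symm h₂ h₁
  have hne : S₁ ≠ S₂ := by
    intro h
    obtain ⟨v, hv⟩ := h₁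
    exact Finset.disjoint_left.mp hdisj hv (h ▸ hv)
  have h1mem : S₁ ∉ insert S₂ (P.erase C) := by
    simp only [Finset.mem_insert, Finset.mem_erase]
    rintro (h | ⟨_, h⟩)
    · exact hne h
    · exact hS1P h
  have h2mem : S₂ ∉ P.erase C := fun h => hS2P (Finset.mem_of_mem_erase h)
  set f : Finset V → ℝ :=
    fun C => eBetween G C C / 2 - γ * (C.card : ℝ) * ((C.card : ℝ) - 1) / 2 with hf
  have hnew : cpmQuality G γ (insert S₁ (insert S₂ (P.erase C)))
      = f S₁ + f S₂ + ∑ D ∈ P.erase C, f D := by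
    unfold cpmQuality
    rw [Finset.sum_insert h1mem, Finset.sum_insert h2mem]; ring
  have hold : cpmQuality G γ P = f C + ∑ D ∈ P.erase C, f D := by
    unfold cpmQuality
    rw [← Finset.sum_erase_add P _ hC]; ring
  rw [hnew, hold]
  have hsep' : eBetween G S₂ S₁ = 0 := by rw [eBetween_comm]; exact hsep
  have hE : eBetween G C C = eBetween G S₁ S₁ + eBetween G S₂ S₂ := by
    rw [hunion]
    unfold eBetween at *
    simp only [Finset.sum_union hdisj, Finset.sum_add_distrib]
    rw [hsep, hsep']
    ring
  have hcard : (C.card : ℝ) = (S₁.card : ℝ) + (S₂.card : ℝ) := by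
    rw [hunion]
    rw [Finset.card_union_of_disjoint hdisj]
    push_cast; ring
  have ha : (1 : ℝ) ≤ (S₁.card : ℝ) := by
    exact_mod_cast Finset.one_le_card.mpr h₁
  have hb : (1 : ℝ) ≤ (S₂.card : ℝ) := by
    exact_mod_cast Finset.one_le_card.mpr h₂
  have : f S₁ + f S₂ + ∑ D ∈ P.erase C, f D - (f C + ∑ D ∈ P.erase C, f D)
      = γ * (S₁.card : ℝ) * (S₂.card : ℝ) := by
    simp only [hf, hE, hcard]; ring
  rw [this]
  positivity

/-- **Theorem (splitting a disconnected community strictly increases CPM quality).**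
If `C ∈ P` is the disjoint union of nonempty sets `S₁` and `S₂` with `E(S₁,S₂) = 0`, then
`ΔH(S₁ ↦ ∅) > 0` and `ΔH(S₂ ↦ ∅) > 0`, where `ΔH(Sᵢ ↦ ∅) = H(P'ᵢ) − H(P)` and `P'ᵢ` is
obtained from `P` by replacing the community `C` by the two communities `Sᵢ` and `C − Sᵢ`. -/
theorem split_disconnected_community_increases_cpm
    [Fintype V] [DecidableEq V] (G : SimpleGraph V) [DecidableRel G.Adj]
    (γ : ℝ) (hγ : 0 < γ)
    (P : Finset (Finset V)) (hP : IsPartition P)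
    (C S₁ S₂ : Finset V) (hC : C ∈ P)
    (hunion : C = S₁ ∪ S₂) (hdisj : Disjoint S₁ S₂)
    (h₁ : S₁.Nonempty) (h₂ : S₂.Nonempty)
    (hsep : eBetween G S₁ S₂ = 0) :
    0 < cpmQuality G γ (insert S₁ (insert (C \ S₁) (P.erase C))) - cpmQuality G γ P ∧
    0 < cpmQuality G γ (insert S₂ (insert (C \ S₂) (P.erase C))) - cpmQuality G γ P := by
  have e1 : C \ S₁ = S₂ := by rw [hunion]; exact Finset.union_sdiff_cancel_left hdisj
  have e2 : C \ S₂ = S₁ := by rw [hunion]; exact Finset.union_sdiff_cancel_right hdisj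
  rw [e1, e2]
  refine ⟨key_split G γ hγ P hP C S₁ S₂ hC hunion hdisj h₁ h₂ hsep, ?_⟩
  exact key_split G γ hγ P hP C S₂ S₁ hC (by rw [hunion, Finset.union_comm]) hdisj.symm h₂ h₁
    (by rw [eBetween_comm]; exact hsep)
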